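/- Let H ∈ (0,1) and define p : ℝ × (0,∞) → ℝ by p(x,t) = (2/π) ∫₀^∞ (exp(−x²/(2s^{2H}))/√(2π s^{2H})) · (t/(t²+s²)) ds. Then for every x ≠ 0 and t > 0, p satisfies t² ∂²p/∂t² = −H(H−1) ∂/∂x ( x·p(x,t) ) + H² ∂²/∂x² ( x²·p(x,t) ). -/

import Mathlib

/-!
Write `p = (2/π) ∫₀^∞ g(x,s) C(t,s) ds` with `g(·,s)` the `N(0, s^{2H})` density and
`C(t,s) = t/(t²+s²)`. Self-similarity of `g` gives
`s² ∂ₛ²g = H(H+1) g + H(3H+1) x ∂ₓg + H² x² ∂ₓ²g`, which is the right-hand side operator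
`-H(H-1) ∂ₓ(x ·) + H² ∂ₓ²(x² ·)` applied to `g`. The kernel `C` is harmonic, `∂ₜ²C = -∂ₛ²C`, and
`(t²+s²) C = t`; integrating by parts twice in `s` therefore turns `t² ∫ g ∂ₜ²C ds` into
`∫ (s² ∂ₛ²g) C ds`. The boundary terms vanish because, for `x ≠ 0`, `g` decays faster than any power
as `s → 0`, and like `s^{-H}` as `s → ∞`. All differentiations under the integral sign are dominated
by multiples of `s^{-H}/(k+s²)`, which is integrable on `(0, ∞)` because `-1 < H < 1`.
-/

open Real MeasureTheory

/-- Density of `B_H(|C(t)|)`: a fractional Brownian motion with Hurst parameter `H`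
composed with the absolute value of an independent standard Cauchy process. -/
noncomputable def fbmCauchyDensity (H : ℝ) (x t : ℝ) : ℝ :=
  (2 / π) * ∫ s in Set.Ioi (0 : ℝ),
    (Real.exp (-x ^ 2 / (2 * s ^ (2 * H))) / Real.sqrt (2 * π * s ^ (2 * H))) *
      (t / (t ^ 2 + s ^ 2))

open Set Filter Topology

theorem integral_Ioi_of_hasDerivAt_of_tendsto_nhdsGT {E : Type*} [NormedAddCommGroup E]
    [NormedSpace ℝ E] [CompleteSpace E] {f f' : ℝ → E} {a : ℝ} {m₀ m : E}
    (ha : Tendsto f (𝓝[>] a) (𝓝 m₀)) (hderiv : ∀ x ∈ Ioi a, HasDerivAt f (f' x) x)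
    (hint : IntegrableOn f' (Ioi a)) (htop : Tendsto f atTop (𝓝 m)) :
    ∫ x in Ioi a, f' x = m - m₀ := by
  classical
  -- Redefining `f` at `a` makes it continuous there without changing `f'` or the limit at `∞`.
  have hcont : ContinuousWithinAt (Function.update f a m₀) (Ici a) a := by
    have hIci : Ici a \ {a} = Ioi a := by ext; simp [lt_iff_le_and_ne]
    rwa [continuousWithinAt_update_same, hIci]
  have hderiv' : ∀ x ∈ Ioi a, HasDerivAt (Function.update f a m₀) (f' x) x := fun x hx =>
    (hderiv x hx).congr_of_eventuallyEq <| by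
      filter_upwards [eventually_ne_nhds (ne_of_gt hx)] with y hy
      exact Function.update_of_ne hy _ _
  have htop' : Tendsto (Function.update f a m₀) atTop (𝓝 m) := htop.congr' <| by
    filter_upwards [eventually_ne_atTop a] with y hy
    exact (Function.update_of_ne hy _ _).symm
  simpa using integral_Ioi_of_hasDerivAt_of_tendsto hcont hderiv' hint htop'

theorem iteratedDeriv_two_eq_of_hasDerivAt {𝕜 F : Type*} [NontriviallyNormedField 𝕜]
    [NormedAddCommGroup F] [NormedSpace 𝕜 F] {f f' : 𝕜 → F} {x : 𝕜} {f'' : F}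
    (hf : ∀ᶠ y in 𝓝 x, HasDerivAt f (f' y) y) (hf' : HasDerivAt f' f'' x) :
    iteratedDeriv 2 f x = f'' := by
  rw [iteratedDeriv_succ, iteratedDeriv_one,
    Filter.EventuallyEq.deriv_eq (hf.mono fun y hy => hy.deriv)]
  exact hf'.deriv

theorem mul_exp_neg_mul_le {b : ℝ} (hb : 0 < b) (u : ℝ) : u * exp (-(b * u)) ≤ b⁻¹ := by
  have h := add_one_le_exp (b * u)
  rw [exp_neg, ← div_eq_mul_inv, div_le_iff₀ (exp_pos _), inv_mul_eq_div, le_div_iff₀ hb]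
  nlinarith

theorem pow_mul_exp_neg_mul_le (n : ℕ) {a u : ℝ} (ha : 0 < a) (hu : 0 ≤ u) :
    u ^ n * exp (-(a * u)) ≤ (n / a) ^ n := by
  rcases Nat.eq_zero_or_pos n with rfl | hn
  · simpa using mul_nonneg ha.le hu
  have hn' : (0 : ℝ) < n := by exact_mod_cast hn
  calc u ^ n * exp (-(a * u)) = (u * exp (-(a / n * u))) ^ n := by
        rw [mul_pow, ← exp_nat_mul]
        congr 2
        field_simp
    _ ≤ (a / n)⁻¹ ^ n :=
        pow_le_pow_left₀ (by positivity) (mul_exp_neg_mul_le (by positivity) u) n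
    _ = (n / a) ^ n := by rw [inv_div]

theorem integrableOn_rpow_neg_div_add_sq {H k : ℝ} (hH₀ : -1 < H) (hH₁ : H < 1) (hk : 0 < k) :
    IntegrableOn (fun s => s ^ (-H) / (k + s ^ 2)) (Ioi 0) := by
  have hmeas : AEStronglyMeasurable (fun s : ℝ => s ^ (-H) / (k + s ^ 2)) volume :=
    (by fun_prop : Measurable fun s : ℝ => s ^ (-H) / (k + s ^ 2)).aestronglyMeasurable
  rw [← Ioc_union_Ioi_eq_Ioi zero_le_one]
  refine IntegrableOn.union ?_ ?_
  · have h0 : IntegrableOn (fun s : ℝ => s ^ (-H)) (Ioc 0 1) :=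
      (intervalIntegrable_iff_integrableOn_Ioc_of_le zero_le_one).1
        (intervalIntegral.intervalIntegrable_rpow' (by linarith))
    refine (h0.mul_const k⁻¹).mono' hmeas.restrict
      ((ae_restrict_iff' measurableSet_Ioc).2 (Eventually.of_forall fun s hs => ?_))
    have h1 : 0 ≤ s ^ (-H) := rpow_nonneg hs.1.le _
    rw [norm_of_nonneg (by positivity), ← div_eq_mul_inv]
    exact div_le_div_of_nonneg_left h1 hk (by nlinarith)
  · refine (integrableOn_Ioi_rpow_of_lt (show -H - 2 < -1 by linarith) one_pos).mono'
      hmeas.restrict ((ae_restrict_iff' measurableSet_Ioi).2 (Eventually.of_forall fun s hs => ?_))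
    have hs0 : 0 < s := one_pos.trans hs
    have h1 : 0 ≤ s ^ (-H) := rpow_nonneg hs0.le _
    rw [norm_of_nonneg (by positivity), rpow_sub hs0, rpow_two]
    exact div_le_div_of_nonneg_left h1 (by positivity) (by linarith)

theorem hasDerivAt_integral_Ioi_of_le_rpow_neg_div {F F' : ℝ → ℝ → ℝ} {H k M x₀ r : ℝ}
    (hH₀ : -1 < H) (hH₁ : H < 1) (hk : 0 < k) (hr : 0 < r)
    (hF_meas : ∀ x, Measurable (F x)) (hF'_meas : Measurable (F' x₀))
    (hF_int : IntegrableOn (F x₀) (Ioi 0))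
    (h_bound : ∀ s ∈ Ioi (0 : ℝ), ∀ x ∈ Metric.ball x₀ r,
      |F' x s| ≤ M * (s ^ (-H) / (k + s ^ 2)))
    (h_diff : ∀ s ∈ Ioi (0 : ℝ), ∀ x ∈ Metric.ball x₀ r, HasDerivAt (F · s) (F' x s) x) :
    IntegrableOn (F' x₀) (Ioi 0) ∧
      HasDerivAt (fun x => ∫ s in Ioi 0, F x s) (∫ s in Ioi 0, F' x₀ s) x₀ :=
  hasDerivAt_integral_of_dominated_loc_of_deriv_le (Metric.ball_mem_nhds x₀ hr)
    (Eventually.of_forall fun x => (hF_meas x).aestronglyMeasurable) hF_int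
    hF'_meas.aestronglyMeasurable
    ((ae_restrict_iff' measurableSet_Ioi).2 (Eventually.of_forall h_bound))
    ((integrableOn_rpow_neg_div_add_sq hH₀ hH₁ hk).const_mul M)
    ((ae_restrict_iff' measurableSet_Ioi).2 (Eventually.of_forall h_diff))

theorem half_abs_lt_abs_of_mem_ball {x y : ℝ} (hy : y ∈ Metric.ball x (|x| / 2)) :
    |x| / 2 < |y| := by
  rw [Metric.mem_ball, Real.dist_eq] at hy
  linarith [abs_sub_abs_le_abs_sub x y, abs_sub_comm x y]

theorem ne_zero_of_mem_ball_half_abs {x y : ℝ} (hy : y ∈ Metric.ball x (|x| / 2)) : y ≠ 0 :=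
  abs_pos.1 ((by positivity : 0 ≤ |x| / 2).trans_lt (half_abs_lt_abs_of_mem_ball hy))

noncomputable def fbmDensity (H x s : ℝ) : ℝ :=
  (√(2 * π))⁻¹ * s ^ (-H) * exp (-(x ^ 2 / 2 * s ^ (-(2 * H))))

noncomputable def fbmDensityDx (H x s : ℝ) : ℝ := -(x * s ^ (-(2 * H))) * fbmDensity H x s

noncomputable def fbmDensityDxx (H x s : ℝ) : ℝ :=
  (x ^ 2 * (s ^ (-(2 * H))) ^ 2 - s ^ (-(2 * H))) * fbmDensity H x s

noncomputable def fbmDensityDs (H x s : ℝ) : ℝ :=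
  H * (x ^ 2 * s ^ (-(2 * H)) - 1) / s * fbmDensity H x s

noncomputable def fbmDensityDss (H x s : ℝ) : ℝ :=
  (H ^ 2 * (x ^ 2 * s ^ (-(2 * H)) - 1) ^ 2 - 2 * H ^ 2 * x ^ 2 * s ^ (-(2 * H))
    - H * (x ^ 2 * s ^ (-(2 * H)) - 1)) / s ^ 2 * fbmDensity H x s

noncomputable def cauchyKernel (t s : ℝ) : ℝ := t / (t ^ 2 + s ^ 2)

noncomputable def cauchyKernelDt (t s : ℝ) : ℝ := (s ^ 2 - t ^ 2) / (t ^ 2 + s ^ 2) ^ 2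

noncomputable def cauchyKernelDtt (t s : ℝ) : ℝ :=
  2 * t * (t ^ 2 - 3 * s ^ 2) / (t ^ 2 + s ^ 2) ^ 3

noncomputable def cauchyKernelDs (t s : ℝ) : ℝ := -(2 * t * s) / (t ^ 2 + s ^ 2) ^ 2

section Kernels

variable {H x t s : ℝ}

@[fun_prop] theorem measurable_fbmDensity : Measurable (fbmDensity H x) := by
  unfold fbmDensity; fun_prop

@[fun_prop] theorem measurable_fbmDensityDx : Measurable (fbmDensityDx H x) := by
  unfold fbmDensityDx; fun_prop

@[fun_prop] theorem measurable_fbmDensityDxx : Measurable (fbmDensityDxx H x) := by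
  unfold fbmDensityDxx; fun_prop

@[fun_prop] theorem measurable_cauchyKernel : Measurable (cauchyKernel t) := by
  unfold cauchyKernel; fun_prop

@[fun_prop] theorem measurable_cauchyKernelDt : Measurable (cauchyKernelDt t) := by
  unfold cauchyKernelDt; fun_prop

@[fun_prop] theorem measurable_cauchyKernelDtt : Measurable (cauchyKernelDtt t) := by
  unfold cauchyKernelDtt; fun_prop

theorem hasDerivAt_fbmDensity_x :
    HasDerivAt (fbmDensity H · s) (fbmDensityDx H x s) x := by
  have h := ((((hasDerivAt_pow 2 x).div_const 2).mul_const (s ^ (-(2 * H)))).neg.exp).const_mul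
    ((√(2 * π))⁻¹ * s ^ (-H))
  refine h.congr_deriv ?_
  simp only [fbmDensityDx, fbmDensity, Pi.neg_apply]
  ring

theorem hasDerivAt_fbmDensityDx_x :
    HasDerivAt (fbmDensityDx H · s) (fbmDensityDxx H x s) x := by
  refine (((hasDerivAt_id x).mul_const (s ^ (-(2 * H)))).neg.mul
    hasDerivAt_fbmDensity_x).congr_deriv ?_
  simp only [fbmDensityDxx, fbmDensityDx, Pi.neg_apply, id]
  ring

theorem hasDerivAt_fbmDensity_s (hs : 0 < s) :
    HasDerivAt (fbmDensity H x) (fbmDensityDs H x s) s := by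
  have hσ := hasDerivAt_rpow_const (p := -(2 * H)) (Or.inl hs.ne')
  have h := ((hasDerivAt_rpow_const (p := -H) (Or.inl hs.ne')).const_mul (√(2 * π))⁻¹).mul
    (hσ.const_mul (x ^ 2 / 2)).neg.exp
  refine h.congr_deriv ?_
  simp only [fbmDensityDs, fbmDensity, rpow_sub_one hs.ne', Pi.neg_apply]
  field_simp
  ring

theorem hasDerivAt_fbmDensityDs_s (hs : 0 < s) :
    HasDerivAt (fbmDensityDs H x) (fbmDensityDss H x s) s := by
  have hσ := hasDerivAt_rpow_const (p := -(2 * H)) (Or.inl hs.ne')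
  have h := ((((hσ.const_mul (x ^ 2)).sub_const 1).const_mul H).div (hasDerivAt_id s)
    hs.ne').mul (hasDerivAt_fbmDensity_s (H := H) (x := x) hs)
  refine h.congr_deriv ?_
  simp only [fbmDensityDss, fbmDensityDs, rpow_sub_one hs.ne', Pi.div_apply, id]
  field_simp
  ring

theorem hasDerivAt_cauchyKernel_t (ht : t ≠ 0) :
    HasDerivAt (cauchyKernel · s) (cauchyKernelDt t s) t := by
  have hne : t ^ 2 + s ^ 2 ≠ 0 := by positivity
  refine ((hasDerivAt_id t).div ((hasDerivAt_pow 2 t).add_const (s ^ 2)) hne).congr_deriv ?_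
  simp only [cauchyKernelDt, id]
  field_simp
  ring

theorem hasDerivAt_cauchyKernelDt_t (ht : t ≠ 0) :
    HasDerivAt (cauchyKernelDt · s) (cauchyKernelDtt t s) t := by
  have hne : t ^ 2 + s ^ 2 ≠ 0 := by positivity
  refine (((hasDerivAt_pow 2 t).const_sub (s ^ 2)).div
    (((hasDerivAt_pow 2 t).add_const (s ^ 2)).pow 2) (pow_ne_zero 2 hne)).congr_deriv ?_
  simp only [cauchyKernelDtt, Pi.pow_apply]
  field_simp
  ring

theorem hasDerivAt_cauchyKernel_s (ht : t ≠ 0) :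
    HasDerivAt (cauchyKernel t) (cauchyKernelDs t s) s := by
  have hne : t ^ 2 + s ^ 2 ≠ 0 := by positivity
  refine ((hasDerivAt_const s t).div ((hasDerivAt_pow 2 s).const_add (t ^ 2)) hne).congr_deriv ?_
  simp only [cauchyKernelDs]
  field_simp
  ring

/-- Harmonicity of the Cauchy kernel in `(t, s)`. -/
theorem hasDerivAt_cauchyKernelDs_s (ht : t ≠ 0) :
    HasDerivAt (cauchyKernelDs t) (-cauchyKernelDtt t s) s := by
  have hne : t ^ 2 + s ^ 2 ≠ 0 := by positivity
  refine (((hasDerivAt_id s).const_mul (2 * t)).neg.div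
    (((hasDerivAt_pow 2 s).const_add (t ^ 2)).pow 2) (pow_ne_zero 2 hne)).congr_deriv ?_
  simp only [cauchyKernelDtt, Pi.neg_apply, Pi.pow_apply, id]
  field_simp
  ring

/-- Self-similarity, `fbmDensity H x s = s ^ (-H) * φ (x * s ^ (-H))`, turns `s ∂ₛ` into
`-H ∂ₓ (x ·)`; applying this twice gives the `s`-form of the right-hand side of the equation. -/
theorem sq_mul_fbmDensityDss (hs : 0 < s) :
    s ^ 2 * fbmDensityDss H x s = H * (H + 1) * fbmDensity H x s
      + H * (3 * H + 1) * x * fbmDensityDx H x s + H ^ 2 * x ^ 2 * fbmDensityDxx H x s := by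
  simp only [fbmDensityDss, fbmDensityDx, fbmDensityDxx]
  field_simp
  ring

theorem sq_add_sq_mul_cauchyKernel (ht : t ≠ 0) : (t ^ 2 + s ^ 2) * cauchyKernel t s = t := by
  unfold cauchyKernel
  field_simp

theorem fbmDensity_nonneg (hs : 0 ≤ s) : 0 ≤ fbmDensity H x s := by
  have := rpow_nonneg hs (-H)
  unfold fbmDensity
  positivity

theorem fbmDensity_le (hs : 0 ≤ s) : fbmDensity H x s ≤ (√(2 * π))⁻¹ * s ^ (-H) := by
  refine mul_le_of_le_one_right (by positivity) (exp_le_one_iff.2 ?_)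
  have := rpow_nonneg hs (-(2 * H))
  nlinarith [sq_nonneg x]

theorem abs_fbmDensityDx_le (hx : x ≠ 0) (hs : 0 ≤ s) :
    |fbmDensityDx H x s| ≤ 2 / |x| * ((√(2 * π))⁻¹ * s ^ (-H)) := by
  have hσ := rpow_nonneg hs (-(2 * H))
  have he := pow_mul_exp_neg_mul_le 1 (show 0 < x ^ 2 / 2 by positivity) hσ
  calc |fbmDensityDx H x s|
      = |x| * ((√(2 * π))⁻¹ * s ^ (-H)) *
          ((s ^ (-(2 * H))) ^ 1 * exp (-(x ^ 2 / 2 * s ^ (-(2 * H))))) := by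
        rw [fbmDensityDx, abs_mul, abs_neg, abs_mul, abs_of_nonneg hσ,
          abs_of_nonneg (fbmDensity_nonneg hs), fbmDensity]
        ring
    _ ≤ |x| * ((√(2 * π))⁻¹ * s ^ (-H)) * (((1 : ℕ) : ℝ) / (x ^ 2 / 2)) ^ 1 := by gcongr
    _ = 2 / |x| * ((√(2 * π))⁻¹ * s ^ (-H)) := by
        push_cast
        rw [← sq_abs]
        field_simp

theorem abs_fbmDensityDxx_le (hx : x ≠ 0) (hs : 0 ≤ s) :
    |fbmDensityDxx H x s| ≤ 18 / x ^ 2 * ((√(2 * π))⁻¹ * s ^ (-H)) := by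
  set σ := s ^ (-(2 * H))
  have hσ : 0 ≤ σ := rpow_nonneg hs _
  have ha : 0 < x ^ 2 / 2 := by positivity
  have he1 := pow_mul_exp_neg_mul_le 1 ha hσ
  have he2 := pow_mul_exp_neg_mul_le 2 ha hσ
  have habs : |x ^ 2 * σ ^ 2 - σ| ≤ x ^ 2 * σ ^ 2 + σ := by
    rw [abs_le]; constructor <;> nlinarith [mul_nonneg (sq_nonneg x) (sq_nonneg σ)]
  calc |fbmDensityDxx H x s|
      ≤ (x ^ 2 * σ ^ 2 + σ) * (((√(2 * π))⁻¹ * s ^ (-H)) * exp (-(x ^ 2 / 2 * σ))) := by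
        rw [fbmDensityDxx, abs_mul, abs_of_nonneg (fbmDensity_nonneg hs)]
        exact mul_le_mul_of_nonneg_right habs (fbmDensity_nonneg hs)
    _ = ((√(2 * π))⁻¹ * s ^ (-H)) *
          (x ^ 2 * (σ ^ 2 * exp (-(x ^ 2 / 2 * σ))) + σ ^ 1 * exp (-(x ^ 2 / 2 * σ))) := by ring
    _ ≤ ((√(2 * π))⁻¹ * s ^ (-H)) *
          (x ^ 2 * (((2 : ℕ) : ℝ) / (x ^ 2 / 2)) ^ 2 + (((1 : ℕ) : ℝ) / (x ^ 2 / 2)) ^ 1) := by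
        gcongr
    _ = 18 / x ^ 2 * ((√(2 * π))⁻¹ * s ^ (-H)) := by
        push_cast
        field_simp
        ring

theorem abs_cauchyKernel_le (ht : t ≠ 0) : |cauchyKernel t s| ≤ 1 / |t| := by
  rw [cauchyKernel, abs_div, abs_of_pos (by positivity : 0 < t ^ 2 + s ^ 2),
    div_le_div_iff₀ (by positivity) (by positivity), ← sq_abs]
  nlinarith [sq_nonneg s]

theorem abs_cauchyKernelDs_le (ht : t ≠ 0) : |cauchyKernelDs t s| ≤ 1 / t ^ 2 := by
  rw [cauchyKernelDs, abs_div, abs_neg, abs_of_pos (by positivity : 0 < (t ^ 2 + s ^ 2) ^ 2),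
    div_le_div_iff₀ (by positivity) (by positivity)]
  have h1 : |2 * t * s| ≤ t ^ 2 + s ^ 2 := by
    rw [abs_le]; constructor <;> nlinarith [sq_nonneg (t - s), sq_nonneg (t + s)]
  nlinarith [sq_nonneg s]

theorem abs_cauchyKernelDt_le (ht : t ≠ 0) : |cauchyKernelDt t s| ≤ 1 / (t ^ 2 + s ^ 2) := by
  have hts : 0 < t ^ 2 + s ^ 2 := by positivity
  rw [cauchyKernelDt, abs_div, abs_of_pos (by positivity : 0 < (t ^ 2 + s ^ 2) ^ 2),
    div_le_div_iff₀ (by positivity) hts]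
  have h1 : |s ^ 2 - t ^ 2| ≤ t ^ 2 + s ^ 2 := by
    rw [abs_le]; constructor <;> nlinarith [sq_nonneg t, sq_nonneg s]
  nlinarith

theorem abs_cauchyKernelDtt_le (ht : t ≠ 0) :
    |cauchyKernelDtt t s| ≤ 6 / (|t| * (t ^ 2 + s ^ 2)) := by
  have h1 : |t ^ 2 - 3 * s ^ 2| ≤ 3 * (t ^ 2 + s ^ 2) := by
    rw [abs_le]; constructor <;> nlinarith [sq_nonneg t, sq_nonneg s]
  have h2 : |t| ^ 2 ≤ t ^ 2 + s ^ 2 := by rw [sq_abs]; nlinarith [sq_nonneg s]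
  rw [cauchyKernelDtt, abs_div, abs_of_pos (by positivity : 0 < (t ^ 2 + s ^ 2) ^ 3),
    div_le_div_iff₀ (by positivity) (by positivity), abs_mul, abs_mul, abs_two]
  calc 2 * |t| * |t ^ 2 - 3 * s ^ 2| * (|t| * (t ^ 2 + s ^ 2))
      = 2 * |t| ^ 2 * (t ^ 2 + s ^ 2) * |t ^ 2 - 3 * s ^ 2| := by ring
    _ ≤ 2 * (t ^ 2 + s ^ 2) * (t ^ 2 + s ^ 2) * (3 * (t ^ 2 + s ^ 2)) := by gcongr
    _ = 6 * (t ^ 2 + s ^ 2) ^ 3 := by ring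

end Kernels

theorem fbmCauchyDensity_eq_integral (H x t : ℝ) :
    fbmCauchyDensity H x t = 2 / π * ∫ s in Ioi 0, fbmDensity H x s * cauchyKernel t s := by
  unfold fbmCauchyDensity
  congr 1
  refine setIntegral_congr_fun measurableSet_Ioi fun s (hs : 0 < s) => ?_
  have hsqrt : √(2 * π * s ^ (2 * H)) = √(2 * π) * s ^ H := by
    rw [sqrt_mul (by positivity), ← sqrt_sq (rpow_nonneg hs.le H), ← rpow_natCast,
      ← rpow_mul hs.le]
    norm_num [mul_comm]
  have hexp : -x ^ 2 / (2 * s ^ (2 * H)) = -(x ^ 2 / 2 * s ^ (-(2 * H))) := by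
    rw [rpow_neg hs.le]
    ring
  rw [fbmDensity, cauchyKernel, hsqrt, hexp, rpow_neg hs.le H]
  field_simp

section Integrals

variable {H x t : ℝ}

theorem integrableOn_fbmDensity_mul_cauchyKernel (hH₀ : -1 < H) (hH₁ : H < 1) (ht : t ≠ 0) :
    IntegrableOn (fun s => fbmDensity H x s * cauchyKernel t s) (Ioi 0) := by
  refine ((integrableOn_rpow_neg_div_add_sq hH₀ hH₁ (k := t ^ 2) (by positivity)).const_mul
    ((√(2 * π))⁻¹ * |t|)).mono' (by fun_prop : Measurable _).aestronglyMeasurable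
    ((ae_restrict_iff' measurableSet_Ioi).2 (Eventually.of_forall fun s (hs : 0 < s) => ?_))
  rw [Real.norm_eq_abs, abs_mul, abs_of_nonneg (fbmDensity_nonneg hs.le), cauchyKernel, abs_div,
    abs_of_pos (by positivity : 0 < t ^ 2 + s ^ 2)]
  calc fbmDensity H x s * (|t| / (t ^ 2 + s ^ 2))
      ≤ (√(2 * π))⁻¹ * s ^ (-H) * (|t| / (t ^ 2 + s ^ 2)) := by
        gcongr
        exact fbmDensity_le hs.le
    _ = (√(2 * π))⁻¹ * |t| * (s ^ (-H) / (t ^ 2 + s ^ 2)) := by ring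

theorem hasDerivAt_integral_fbmDensity_mul_cauchyKernel_t (hH₀ : -1 < H) (hH₁ : H < 1)
    (ht : t ≠ 0) :
    IntegrableOn (fun s => fbmDensity H x s * cauchyKernelDt t s) (Ioi 0) ∧
      HasDerivAt (fun τ => ∫ s in Ioi 0, fbmDensity H x s * cauchyKernel τ s)
        (∫ s in Ioi 0, fbmDensity H x s * cauchyKernelDt t s) t := by
  refine hasDerivAt_integral_Ioi_of_le_rpow_neg_div
    (F := fun τ s => fbmDensity H x s * cauchyKernel τ s)
    (F' := fun τ s => fbmDensity H x s * cauchyKernelDt τ s) hH₀ hH₁ (k := (t / 2) ^ 2)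
    (M := (√(2 * π))⁻¹) (r := |t| / 2) (by positivity) (by positivity) (fun _ => by fun_prop)
    (by fun_prop) (integrableOn_fbmDensity_mul_cauchyKernel hH₀ hH₁ ht)
    (fun s (hs : 0 < s) τ hτ => ?_) fun s _ τ hτ => ?_
  · have hsq : (t / 2) ^ 2 ≤ τ ^ 2 := by
      rw [sq_le_sq, abs_div, abs_two]; exact (half_abs_lt_abs_of_mem_ball hτ).le
    rw [abs_mul, abs_of_nonneg (fbmDensity_nonneg hs.le)]
    calc fbmDensity H x s * |cauchyKernelDt τ s|
        ≤ (√(2 * π))⁻¹ * s ^ (-H) * (1 / (τ ^ 2 + s ^ 2)) :=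
          mul_le_mul (fbmDensity_le hs.le) (abs_cauchyKernelDt_le (ne_zero_of_mem_ball_half_abs hτ))
            (abs_nonneg _) (by positivity)
      _ ≤ (√(2 * π))⁻¹ * s ^ (-H) * (1 / ((t / 2) ^ 2 + s ^ 2)) := by gcongr
      _ = (√(2 * π))⁻¹ * (s ^ (-H) / ((t / 2) ^ 2 + s ^ 2)) := by ring
  · exact (hasDerivAt_cauchyKernel_t (ne_zero_of_mem_ball_half_abs hτ)).const_mul _

theorem hasDerivAt_integral_fbmDensity_mul_cauchyKernelDt_t (hH₀ : -1 < H) (hH₁ : H < 1)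
    (ht : t ≠ 0) :
    IntegrableOn (fun s => fbmDensity H x s * cauchyKernelDtt t s) (Ioi 0) ∧
      HasDerivAt (fun τ => ∫ s in Ioi 0, fbmDensity H x s * cauchyKernelDt τ s)
        (∫ s in Ioi 0, fbmDensity H x s * cauchyKernelDtt t s) t := by
  refine hasDerivAt_integral_Ioi_of_le_rpow_neg_div
    (F := fun τ s => fbmDensity H x s * cauchyKernelDt τ s)
    (F' := fun τ s => fbmDensity H x s * cauchyKernelDtt τ s) hH₀ hH₁ (k := (t / 2) ^ 2)
    (M := (√(2 * π))⁻¹ * (12 / |t|)) (r := |t| / 2) (by positivity) (by positivity)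
    (fun _ => by fun_prop) (by fun_prop)
    (hasDerivAt_integral_fbmDensity_mul_cauchyKernel_t hH₀ hH₁ ht).1
    (fun s (hs : 0 < s) τ hτ => ?_) fun s _ τ hτ => ?_
  · have hτ' := half_abs_lt_abs_of_mem_ball hτ
    have hsq : (t / 2) ^ 2 ≤ τ ^ 2 := by
      rw [sq_le_sq, abs_div, abs_two]; exact hτ'.le
    rw [abs_mul, abs_of_nonneg (fbmDensity_nonneg hs.le)]
    calc fbmDensity H x s * |cauchyKernelDtt τ s|
        ≤ (√(2 * π))⁻¹ * s ^ (-H) * (6 / (|τ| * (τ ^ 2 + s ^ 2))) :=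
          mul_le_mul (fbmDensity_le hs.le)
            (abs_cauchyKernelDtt_le (ne_zero_of_mem_ball_half_abs hτ)) (abs_nonneg _)
            (by positivity)
      _ ≤ (√(2 * π))⁻¹ * s ^ (-H) * (6 / (|t| / 2 * ((t / 2) ^ 2 + s ^ 2))) := by
          have : 0 < |t| := abs_pos.2 ht
          gcongr
      _ = (√(2 * π))⁻¹ * (12 / |t|) * (s ^ (-H) / ((t / 2) ^ 2 + s ^ 2)) := by
          field_simp
          ring
  · exact (hasDerivAt_cauchyKernelDt_t (ne_zero_of_mem_ball_half_abs hτ)).const_mul _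

theorem hasDerivAt_integral_fbmDensity_mul_cauchyKernel_x (hH₀ : -1 < H) (hH₁ : H < 1)
    (hx : x ≠ 0) (ht : t ≠ 0) :
    IntegrableOn (fun s => fbmDensityDx H x s * cauchyKernel t s) (Ioi 0) ∧
      HasDerivAt (fun y => ∫ s in Ioi 0, fbmDensity H y s * cauchyKernel t s)
        (∫ s in Ioi 0, fbmDensityDx H x s * cauchyKernel t s) x := by
  refine hasDerivAt_integral_Ioi_of_le_rpow_neg_div
    (F := fun y s => fbmDensity H y s * cauchyKernel t s)
    (F' := fun y s => fbmDensityDx H y s * cauchyKernel t s) hH₀ hH₁ (k := t ^ 2)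
    (M := (√(2 * π))⁻¹ * (4 / |x|) * |t|) (r := |x| / 2) (by positivity) (by positivity)
    (fun _ => by fun_prop) (by fun_prop) (integrableOn_fbmDensity_mul_cauchyKernel hH₀ hH₁ ht)
    (fun s (hs : 0 < s) y hy => ?_) fun s _ y _ => hasDerivAt_fbmDensity_x.mul_const _
  have hy' := half_abs_lt_abs_of_mem_ball hy
  rw [abs_mul, cauchyKernel, abs_div, abs_of_pos (by positivity : 0 < t ^ 2 + s ^ 2)]
  calc |fbmDensityDx H y s| * (|t| / (t ^ 2 + s ^ 2))
      ≤ 2 / |y| * ((√(2 * π))⁻¹ * s ^ (-H)) * (|t| / (t ^ 2 + s ^ 2)) := by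
        gcongr
        exact abs_fbmDensityDx_le (ne_zero_of_mem_ball_half_abs hy) hs.le
    _ ≤ 2 / (|x| / 2) * ((√(2 * π))⁻¹ * s ^ (-H)) * (|t| / (t ^ 2 + s ^ 2)) := by
        have : 0 < |x| := abs_pos.2 hx
        gcongr
    _ = (√(2 * π))⁻¹ * (4 / |x|) * |t| * (s ^ (-H) / (t ^ 2 + s ^ 2)) := by
        field_simp
        ring

theorem hasDerivAt_integral_fbmDensityDx_mul_cauchyKernel_x (hH₀ : -1 < H) (hH₁ : H < 1)
    (hx : x ≠ 0) (ht : t ≠ 0) :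
    IntegrableOn (fun s => fbmDensityDxx H x s * cauchyKernel t s) (Ioi 0) ∧
      HasDerivAt (fun y => ∫ s in Ioi 0, fbmDensityDx H y s * cauchyKernel t s)
        (∫ s in Ioi 0, fbmDensityDxx H x s * cauchyKernel t s) x := by
  refine hasDerivAt_integral_Ioi_of_le_rpow_neg_div
    (F := fun y s => fbmDensityDx H y s * cauchyKernel t s)
    (F' := fun y s => fbmDensityDxx H y s * cauchyKernel t s) hH₀ hH₁ (k := t ^ 2)
    (M := (√(2 * π))⁻¹ * (72 / x ^ 2) * |t|) (r := |x| / 2) (by positivity) (by positivity)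
    (fun _ => by fun_prop) (by fun_prop)
    (hasDerivAt_integral_fbmDensity_mul_cauchyKernel_x hH₀ hH₁ hx ht).1
    (fun s (hs : 0 < s) y hy => ?_) fun s _ y _ => hasDerivAt_fbmDensityDx_x.mul_const _
  have hsq : (x / 2) ^ 2 ≤ y ^ 2 := by
    rw [sq_le_sq, abs_div, abs_two]; exact (half_abs_lt_abs_of_mem_ball hy).le
  rw [abs_mul, cauchyKernel, abs_div, abs_of_pos (by positivity : 0 < t ^ 2 + s ^ 2)]
  calc |fbmDensityDxx H y s| * (|t| / (t ^ 2 + s ^ 2))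
      ≤ 18 / y ^ 2 * ((√(2 * π))⁻¹ * s ^ (-H)) * (|t| / (t ^ 2 + s ^ 2)) := by
        gcongr
        exact abs_fbmDensityDxx_le (ne_zero_of_mem_ball_half_abs hy) hs.le
    _ ≤ 18 / (x / 2) ^ 2 * ((√(2 * π))⁻¹ * s ^ (-H)) * (|t| / (t ^ 2 + s ^ 2)) := by
        gcongr
    _ = (√(2 * π))⁻¹ * (72 / x ^ 2) * |t| * (s ^ (-H) / (t ^ 2 + s ^ 2)) := by
        field_simp
        ring

theorem hasDerivAt_fbmCauchyDensity_x (hH₀ : -1 < H) (hH₁ : H < 1) (hx : x ≠ 0) (ht : t ≠ 0) :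
    HasDerivAt (fbmCauchyDensity H · t)
      (2 / π * ∫ s in Ioi 0, fbmDensityDx H x s * cauchyKernel t s) x := by
  simp only [fbmCauchyDensity_eq_integral]
  exact (hasDerivAt_integral_fbmDensity_mul_cauchyKernel_x hH₀ hH₁ hx ht).2.const_mul _

theorem deriv_mul_fbmCauchyDensity_x (hH₀ : -1 < H) (hH₁ : H < 1) (hx : x ≠ 0) (ht : t ≠ 0) :
    deriv (fun y => y * fbmCauchyDensity H y t) x = fbmCauchyDensity H x t
      + x * (2 / π * ∫ s in Ioi 0, fbmDensityDx H x s * cauchyKernel t s) :=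
  ((hasDerivAt_id' x).mul (hasDerivAt_fbmCauchyDensity_x hH₀ hH₁ hx ht)).deriv.trans (by ring)

theorem iteratedDeriv_two_sq_mul_fbmCauchyDensity_x (hH₀ : -1 < H) (hH₁ : H < 1) (hx : x ≠ 0)
    (ht : t ≠ 0) :
    iteratedDeriv 2 (fun y => y ^ 2 * fbmCauchyDensity H y t) x = 2 * fbmCauchyDensity H x t
      + 4 * x * (2 / π * ∫ s in Ioi 0, fbmDensityDx H x s * cauchyKernel t s)
      + x ^ 2 * (2 / π * ∫ s in Ioi 0, fbmDensityDxx H x s * cauchyKernel t s) := by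
  refine iteratedDeriv_two_eq_of_hasDerivAt (f' := fun y => 2 * y * fbmCauchyDensity H y t
    + y ^ 2 * (2 / π * ∫ s in Ioi 0, fbmDensityDx H y s * cauchyKernel t s)) ?_ ?_
  · filter_upwards [eventually_ne_nhds hx] with y hy
    exact ((hasDerivAt_pow 2 y).mul (hasDerivAt_fbmCauchyDensity_x hH₀ hH₁ hy ht)).congr_deriv
      (by ring)
  · have hpx := hasDerivAt_fbmCauchyDensity_x hH₀ hH₁ hx ht
    have hpxx := (hasDerivAt_integral_fbmDensityDx_mul_cauchyKernel_x hH₀ hH₁ hx ht).2.const_mul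
      (2 / π)
    exact ((((hasDerivAt_id' x).const_mul 2).mul hpx).add
      ((hasDerivAt_pow 2 x).mul hpxx)).congr_deriv (by ring)

theorem iteratedDeriv_two_fbmCauchyDensity_t (hH₀ : -1 < H) (hH₁ : H < 1) (ht : t ≠ 0) :
    iteratedDeriv 2 (fbmCauchyDensity H x ·) t
      = 2 / π * ∫ s in Ioi 0, fbmDensity H x s * cauchyKernelDtt t s := by
  simp only [fbmCauchyDensity_eq_integral]
  refine iteratedDeriv_two_eq_of_hasDerivAt
    (f' := fun τ => 2 / π * ∫ s in Ioi 0, fbmDensity H x s * cauchyKernelDt τ s) ?_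
    ((hasDerivAt_integral_fbmDensity_mul_cauchyKernelDt_t hH₀ hH₁ ht).2.const_mul _)
  filter_upwards [eventually_ne_nhds ht] with τ hτ
  exact (hasDerivAt_integral_fbmDensity_mul_cauchyKernel_t hH₀ hH₁ hτ).2.const_mul _

end Integrals

/-- Its `s`-derivative is `(s² ∂ₛ² g) C - t² g ∂ₜ² C` (`hasDerivAt_fbmCauchyFlux`), so integrating
over `s > 0` moves `∂ₜ²` from the Cauchy kernel `C` onto the Gaussian density `g`. -/
noncomputable def fbmCauchyFlux (H x t s : ℝ) : ℝ :=
  t ^ 2 * (fbmDensity H x s * cauchyKernelDs t s - fbmDensityDs H x s * cauchyKernel t s)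
    + t * fbmDensityDs H x s

section Flux

variable {H x t : ℝ}

theorem hasDerivAt_fbmCauchyFlux {s : ℝ} (hs : 0 < s) (ht : t ≠ 0) :
    HasDerivAt (fbmCauchyFlux H x t)
      (H * (H + 1) * (fbmDensity H x s * cauchyKernel t s)
        + H * (3 * H + 1) * x * (fbmDensityDx H x s * cauchyKernel t s)
        + H ^ 2 * x ^ 2 * (fbmDensityDxx H x s * cauchyKernel t s)
        - t ^ 2 * (fbmDensity H x s * cauchyKernelDtt t s)) s := by
  have hg := hasDerivAt_fbmDensity_s (H := H) (x := x) hs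
  have hgs := hasDerivAt_fbmDensityDs_s (H := H) (x := x) hs
  have h := (((hg.mul (hasDerivAt_cauchyKernelDs_s ht)).sub
    (hgs.mul (hasDerivAt_cauchyKernel_s ht))).const_mul (t ^ 2)).add (hgs.const_mul t)
  refine h.congr_deriv ?_
  linear_combination (cauchyKernel t s) * sq_mul_fbmDensityDss (H := H) (x := x) hs
    - fbmDensityDss H x s * sq_add_sq_mul_cauchyKernel (s := s) ht

theorem tendsto_fbmCauchyFlux {l : Filter ℝ} (ht : t ≠ 0)
    (hg : Tendsto (fbmDensity H x) l (𝓝 0)) (hgs : Tendsto (fbmDensityDs H x) l (𝓝 0)) :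
    Tendsto (fbmCauchyFlux H x t) l (𝓝 0) := by
  have hC : IsBoundedUnder (· ≤ ·) l fun s => ‖cauchyKernel t s‖ :=
    isBoundedUnder_of ⟨1 / |t|, fun _ => abs_cauchyKernel_le ht⟩
  have hCs : IsBoundedUnder (· ≤ ·) l fun s => ‖cauchyKernelDs t s‖ :=
    isBoundedUnder_of ⟨1 / t ^ 2, fun _ => abs_cauchyKernelDs_le ht⟩
  have h := (((hg.zero_mul_isBoundedUnder_le hCs).sub
    (hgs.zero_mul_isBoundedUnder_le hC)).const_mul (t ^ 2)).add (hgs.const_mul t)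
  rwa [sub_self, mul_zero, mul_zero, add_zero] at h

theorem tendsto_fbmDensity_atTop (hH : 0 < H) : Tendsto (fbmDensity H x) atTop (𝓝 0) := by
  have hσ : Tendsto (fun s : ℝ => s ^ (-(2 * H))) atTop (𝓝 0) :=
    tendsto_rpow_neg_atTop (by positivity)
  have h := ((tendsto_rpow_neg_atTop hH).const_mul (√(2 * π))⁻¹).mul
    ((hσ.const_mul (x ^ 2 / 2)).neg.rexp)
  rwa [mul_zero, zero_mul] at h

theorem tendsto_fbmDensityDs_atTop (hH : 0 < H) : Tendsto (fbmDensityDs H x) atTop (𝓝 0) := by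
  have hσ : Tendsto (fun s : ℝ => s ^ (-(2 * H))) atTop (𝓝 0) :=
    tendsto_rpow_neg_atTop (by positivity)
  have h := ((((hσ.const_mul (x ^ 2)).sub_const 1).const_mul H).mul tendsto_inv_atTop_zero).mul
    (tendsto_fbmDensity_atTop (x := x) hH)
  simp only [mul_zero] at h
  exact h.congr fun s => by rw [fbmDensityDs, div_eq_mul_inv]

theorem tendsto_rpow_mul_fbmDensity_nhdsGT_zero (hH : 0 < H) (hx : x ≠ 0) (r : ℝ) :
    Tendsto (fun s => (s ^ (-(2 * H))) ^ r * fbmDensity H x s) (𝓝[>] 0) (𝓝 0) := by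
  have h := ((tendsto_rpow_mul_exp_neg_mul_atTop_nhds_zero (r + 1 / 2) (x ^ 2 / 2)
    (by positivity)).comp (tendsto_rpow_neg_nhdsGT_zero (by linarith : -(2 * H) < 0))).const_mul
    (√(2 * π))⁻¹
  rw [mul_zero] at h
  refine h.congr' ?_
  filter_upwards [self_mem_nhdsWithin] with s (hs : 0 < s)
  have hσ : 0 < s ^ (-(2 * H)) := rpow_pos_of_pos hs _
  have hhalf : (s ^ (-(2 * H))) ^ (1 / 2 : ℝ) = s ^ (-H) := by
    rw [← rpow_mul hs.le]
    ring_nf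
  rw [Function.comp_apply, rpow_add hσ, hhalf, fbmDensity]
  ring_nf

theorem tendsto_fbmDensity_nhdsGT_zero (hH : 0 < H) (hx : x ≠ 0) :
    Tendsto (fbmDensity H x) (𝓝[>] 0) (𝓝 0) := by
  simpa using tendsto_rpow_mul_fbmDensity_nhdsGT_zero hH hx 0

theorem tendsto_fbmDensityDs_nhdsGT_zero (hH : 0 < H) (hx : x ≠ 0) :
    Tendsto (fbmDensityDs H x) (𝓝[>] 0) (𝓝 0) := by
  have h := ((tendsto_rpow_mul_fbmDensity_nhdsGT_zero hH hx (1 + 1 / (2 * H))).const_mul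
    (H * x ^ 2)).sub ((tendsto_rpow_mul_fbmDensity_nhdsGT_zero hH hx (1 / (2 * H))).const_mul H)
  rw [mul_zero, mul_zero, sub_zero] at h
  refine h.congr' ?_
  filter_upwards [self_mem_nhdsWithin] with s (hs : 0 < s)
  have hinv : (s ^ (-(2 * H))) ^ (1 / (2 * H)) = s⁻¹ := by
    rw [← rpow_mul hs.le, show -(2 * H) * (1 / (2 * H)) = -1 by field_simp, rpow_neg_one]
  rw [rpow_add (rpow_pos_of_pos hs _), rpow_one, hinv, fbmDensityDs]
  ring

end Flux

theorem sq_mul_integral_fbmDensity_mul_cauchyKernelDtt {H x t : ℝ} (hH₀ : 0 < H) (hH₁ : H < 1)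
    (hx : x ≠ 0) (ht : t ≠ 0) :
    t ^ 2 * ∫ s in Ioi 0, fbmDensity H x s * cauchyKernelDtt t s
      = H * (H + 1) * (∫ s in Ioi 0, fbmDensity H x s * cauchyKernel t s)
        + H * (3 * H + 1) * x * (∫ s in Ioi 0, fbmDensityDx H x s * cauchyKernel t s)
        + H ^ 2 * x ^ 2 * ∫ s in Ioi 0, fbmDensityDxx H x s * cauchyKernel t s := by
  have hH₀' : -1 < H := by linarith
  have hg := integrableOn_fbmDensity_mul_cauchyKernel (x := x) hH₀' hH₁ ht
  have hgx := (hasDerivAt_integral_fbmDensity_mul_cauchyKernel_x hH₀' hH₁ hx ht).1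
  have hgxx := (hasDerivAt_integral_fbmDensityDx_mul_cauchyKernel_x hH₀' hH₁ hx ht).1
  have hgtt := (hasDerivAt_integral_fbmDensity_mul_cauchyKernelDt_t (x := x) hH₀' hH₁ ht).1
  have hflux := integral_Ioi_of_hasDerivAt_of_tendsto_nhdsGT
    (tendsto_fbmCauchyFlux ht (tendsto_fbmDensity_nhdsGT_zero hH₀ hx)
      (tendsto_fbmDensityDs_nhdsGT_zero hH₀ hx))
    (fun s hs => hasDerivAt_fbmCauchyFlux hs ht)
    ((((hg.const_mul _).add (hgx.const_mul _)).add (hgxx.const_mul _)).sub (hgtt.const_mul _))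
    (tendsto_fbmCauchyFlux ht (tendsto_fbmDensity_atTop hH₀) (tendsto_fbmDensityDs_atTop hH₀))
  rw [integral_sub, integral_add, integral_add, integral_const_mul, integral_const_mul,
    integral_const_mul, integral_const_mul, sub_zero] at hflux
  · linarith
  exacts [hg.const_mul _, hgx.const_mul _, (hg.const_mul _).add (hgx.const_mul _),
    hgxx.const_mul _, ((hg.const_mul _).add (hgx.const_mul _)).add (hgxx.const_mul _),
    hgtt.const_mul _]

/-- For `x ≠ 0` and `t > 0` the density of `B_H(|C(t)|)` satisfies
`t² ∂²p/∂t² = −H(H−1) ∂/∂x (x p) + H² ∂²/∂x² (x² p)`. -/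
theorem fbmCauchyDensity_pde (H : ℝ) (hH : H ∈ Set.Ioo (0 : ℝ) 1) :
    ∀ x t : ℝ, x ≠ 0 → 0 < t →
      t ^ 2 * iteratedDeriv 2 (fun τ => fbmCauchyDensity H x τ) t
        = -(H * (H - 1)) * deriv (fun y => y * fbmCauchyDensity H y t) x
          + H ^ 2 * iteratedDeriv 2 (fun y => y ^ 2 * fbmCauchyDensity H y t) x := by
  obtain ⟨hH₀, hH₁⟩ := hH
  have hH₀' : -1 < H := by linarith
  intro x t hx ht
  rw [iteratedDeriv_two_fbmCauchyDensity_t hH₀' hH₁ ht.ne',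
    deriv_mul_fbmCauchyDensity_x hH₀' hH₁ hx ht.ne',
    iteratedDeriv_two_sq_mul_fbmCauchyDensity_x hH₀' hH₁ hx ht.ne',
    fbmCauchyDensity_eq_integral]
  linear_combination (2 / π) * sq_mul_integral_fbmDensity_mul_cauchyKernelDtt hH₀ hH₁ hx ht.ne'
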